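/- arXiv:2210.01943 — 2 statements merged into one kernel-verified Lean document; each statement's English description precedes it below -/
import Mathlib

section
/- Let A : [0,∞) → Mₙ(ℝ) be locally integrable and suppose the linear system x' = A(t)x has half (M e^{δs}, ν)-nonuniform bounded growth on [0,∞). Then x' = A(t)x admits a (K e^{εs}, γ)-nonuniform exponential contraction on [0,∞) for some constants K ≥ 1 and 0 ≤ ε < γ if and only if its nonuniform exponential dichotomy spectrum satisfies Σ⁺(A) ⊂ (−∞, 0). -/
open MeasureTheory Filter

noncomputable section

/-- `T` is the evolution operator of the linear system `x' = A(t) x`. -/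
def IsEvolution {E : Type*} [NormedAddCommGroup E] [NormedSpace ℝ E]
    (A : ℝ → E →L[ℝ] E) (T : ℝ → ℝ → E →L[ℝ] E) : Prop :=
  (∀ s : ℝ, T s s = ContinuousLinearMap.id ℝ E) ∧
  (∀ t r s : ℝ, (T t r).comp (T r s) = T t s) ∧
  (∀ (s : ℝ) (x : E) (t : ℝ), HasDerivAt (fun r => T r s x) (A t (T t s x)) t)

/-- `(K e^{ε s}, γ)`-nonuniform exponential dichotomy on `[0,∞)` with projections `P`. -/
def NonuniformED {E : Type*} [NormedAddCommGroup E] [NormedSpace ℝ E]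
    (T : ℝ → ℝ → E →L[ℝ] E) (P : ℝ → E →L[ℝ] E) (K ε γ : ℝ) : Prop :=
  1 ≤ K ∧ 0 ≤ ε ∧ ε < γ ∧
  (∀ t : ℝ, 0 ≤ t → (P t).comp (P t) = P t) ∧
  (∀ t s : ℝ, 0 ≤ t → 0 ≤ s → (T t s).comp (P s) = (P t).comp (T t s)) ∧
  (∀ s t : ℝ, 0 ≤ s → s ≤ t →
    ‖(T t s).comp (P s)‖ ≤ K * Real.exp (-γ * (t - s)) * Real.exp (ε * s)) ∧
  (∀ t s : ℝ, 0 ≤ t → t ≤ s →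
    ‖(T t s).comp (ContinuousLinearMap.id ℝ E - P s)‖ ≤ K * Real.exp (-γ * (s - t)) * Real.exp (ε * s))

/-- Nonuniform exponential contraction: dichotomy with `P = I`. -/
def NonuniformContraction {E : Type*} [NormedAddCommGroup E] [NormedSpace ℝ E]
    (T : ℝ → ℝ → E →L[ℝ] E) (K ε γ : ℝ) : Prop :=
  NonuniformED T (fun _ => ContinuousLinearMap.id ℝ E) K ε γ

/-- Half `(M e^{δ s}, ν)`-nonuniform bounded growth on `[0,∞)`. -/
def HalfNBG {E : Type*} [NormedAddCommGroup E] [NormedSpace ℝ E]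
    (T : ℝ → ℝ → E →L[ℝ] E) (M δ ν : ℝ) : Prop :=
  1 ≤ M ∧ 0 ≤ δ ∧ 0 < ν ∧
  ∀ s t : ℝ, 0 ≤ s → s ≤ t → ‖T t s‖ ≤ M * Real.exp (ν * (t - s)) * Real.exp (δ * s)

/-- Nonuniform exponential dichotomy spectrum of the system with evolution operator `T`. -/
def NonuniformSpectrum {E : Type*} [NormedAddCommGroup E] [NormedSpace ℝ E]
    (T : ℝ → ℝ → E →L[ℝ] E) : Set ℝ :=
  {l : ℝ | ¬ ∃ P K ε γ, NonuniformED (fun t s => Real.exp (-l * (t - s)) • T t s) P K ε γ}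

/-- Piecewise continuity: on each compact interval, continuity off a finite set. -/
def PiecewiseContinuous {E : Type*} [TopologicalSpace E] (ω : ℝ → E) : Prop :=
  ∀ a b : ℝ, ∃ s : Finset ℝ, ContinuousOn ω (Set.Icc a b \ ↑s)

/-- Global nonuniform asymptotic stability of the trivial solution of `x' = g(t,x)`. -/
def GloballyNonuniformlyAsymptoticallyStable {E : Type*} [NormedAddCommGroup E]
    [NormedSpace ℝ E] (g : ℝ → E → E) : Prop :=
  (∀ t₀ : ℝ, 0 ≤ t₀ → ∀ η > (0:ℝ), ∃ δ > (0:ℝ), ∀ x : ℝ → E,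
    (∀ t, t₀ ≤ t → HasDerivAt x (g t (x t)) t) → ‖x t₀‖ < δ →
      ∀ t, t₀ ≤ t → ‖x t‖ < η) ∧
  (∀ t₀ : ℝ, 0 ≤ t₀ → ∀ x : ℝ → E,
    (∀ t, t₀ ≤ t → HasDerivAt x (g t (x t)) t) → Tendsto x atTop (nhds 0))

/-- Operator norm with parametrized norm `ND s` on the domain and `NC t` on the codomain. -/
def pNorm {V W : Type*} [NormedAddCommGroup V] [NormedSpace ℝ V]
    [NormedAddCommGroup W] [NormedSpace ℝ W]
    (ND : ℝ → V → ℝ) (NC : ℝ → W → ℝ) (s t : ℝ) (U : V →L[ℝ] W) : ℝ :=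
  sSup {r : ℝ | ∃ x : V, x ≠ 0 ∧ r = NC t (U x) / ND s x}

/-- `N t` is a norm for each `t` (triangle inequality and absolute homogeneity). -/
def IsNormFamily {V : Type*} [NormedAddCommGroup V] [NormedSpace ℝ V]
    (N : ℝ → V → ℝ) : Prop :=
  (∀ t x y, N t (x + y) ≤ N t x + N t y) ∧ ∀ (t : ℝ) (c : ℝ) (x : V), N t (c • x) = |c| * N t x

/-- The block upper triangular operator `[[A, C], [0, B]]` on `E × F`. -/
def blockUpper {E F : Type*} [NormedAddCommGroup E] [NormedSpace ℝ E]
    [NormedAddCommGroup F] [NormedSpace ℝ F]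
    (A : E →L[ℝ] E) (B : F →L[ℝ] F) (C : F →L[ℝ] E) : (E × F) →L[ℝ] (E × F) :=
  ((A.comp (ContinuousLinearMap.fst ℝ E F)) + (C.comp (ContinuousLinearMap.snd ℝ E F))).prod
    (B.comp (ContinuousLinearMap.snd ℝ E F))

/-- Evolution operator of the scalar equation `x' = a(t) x`. -/
def scalarEvol (a : ℝ → ℝ) (t s : ℝ) : ℝ →L[ℝ] ℝ :=
  Real.exp (∫ τ in s..t, a τ) • (1 : ℝ →L[ℝ] ℝ)


section Aux

variable {E : Type*} [NormedAddCommGroup E] [NormedSpace ℝ E]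

lemma norm_exp_smul (a : ℝ) (f : E →L[ℝ] E) :
    ‖Real.exp a • f‖ = Real.exp a * ‖f‖ := by
  rw [norm_smul (α := ℝ) (Real.exp a) f, Real.norm_eq_abs, Real.abs_exp]

lemma norm_exp_smul_comp (a : ℝ) (f g : E →L[ℝ] E) :
    ‖(Real.exp a • f).comp g‖ = Real.exp a * ‖f.comp g‖ := by
  rw [ContinuousLinearMap.smul_comp, norm_exp_smul]

lemma contr_shift (T : ℝ → ℝ → E →L[ℝ] E) {K ε γ l : ℝ} (μ : ℝ)
    (h : NonuniformContraction (fun t s => Real.exp (-l * (t - s)) • T t s) K ε γ)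
    (hγ : ε < γ + μ - l) :
    NonuniformContraction (fun t s => Real.exp (-μ * (t - s)) • T t s) K ε (γ + μ - l) := by
  obtain ⟨hK, hε, hεγ, -, -, hst, -⟩ := h
  have hK0 : (0:ℝ) < K := lt_of_lt_of_le one_pos hK
  refine ⟨hK, hε, hγ, fun t _ => by simp, fun t s _ _ => by simp, ?_, ?_⟩
  · intro s t hs hts
    have h1 := hst s t hs hts
    dsimp only at h1 ⊢
    rw [ContinuousLinearMap.comp_id] at h1 ⊢
    rw [norm_exp_smul] at h1 ⊢
    calc Real.exp (-μ * (t - s)) * ‖T t s‖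
        = Real.exp ((l - μ) * (t - s)) * (Real.exp (-l * (t - s)) * ‖T t s‖) := by
          rw [← mul_assoc, ← Real.exp_add]; ring_nf
      _ ≤ Real.exp ((l - μ) * (t - s)) * (K * Real.exp (-γ * (t - s)) * Real.exp (ε * s)) :=
          mul_le_mul_of_nonneg_left h1 (Real.exp_pos _).le
      _ = K * Real.exp (-(γ + μ - l) * (t - s)) * Real.exp (ε * s) := by
          rw [show -(γ + μ - l) * (t - s) = (l - μ) * (t - s) + -γ * (t - s) by ring,
            Real.exp_add]; ring
  · intro t s _ _
    simp only [sub_self, ContinuousLinearMap.comp_zero, norm_zero]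
    positivity

lemma ed_shift_up (T : ℝ → ℝ → E →L[ℝ] E) (P : ℝ → E →L[ℝ] E) {K ε γ l : ℝ} (μ : ℝ)
    (h : NonuniformED (fun t s => Real.exp (-l * (t - s)) • T t s) P K ε γ)
    (hμ : l ≤ μ) (hγ : ε < γ - (μ - l)) :
    NonuniformED (fun t s => Real.exp (-μ * (t - s)) • T t s) P K ε (γ - (μ - l)) := by
  obtain ⟨hK, hε, hεγ, hproj, hcomm, hst, hun⟩ := h
  have hK0 : (0:ℝ) < K := lt_of_lt_of_le one_pos hK
  refine ⟨hK, hε, hγ, hproj, ?_, ?_, ?_⟩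
  · intro t s ht hs
    have h1 := hcomm t s ht hs
    dsimp only at h1 ⊢
    rw [ContinuousLinearMap.smul_comp, ContinuousLinearMap.comp_smul] at h1
    have h2 : (T t s).comp (P s) = (P t).comp (T t s) :=
      smul_right_injective _ (Real.exp_ne_zero (-l * (t - s))) h1
    rw [ContinuousLinearMap.smul_comp, ContinuousLinearMap.comp_smul, h2]
  · intro s t hs hts
    have h1 := hst s t hs hts
    dsimp only at h1 ⊢
    rw [norm_exp_smul_comp] at h1 ⊢
    calc Real.exp (-μ * (t - s)) * ‖(T t s).comp (P s)‖
        = Real.exp ((l - μ) * (t - s)) * (Real.exp (-l * (t - s)) * ‖(T t s).comp (P s)‖) := by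
          rw [← mul_assoc, ← Real.exp_add]; ring_nf
      _ ≤ Real.exp ((l - μ) * (t - s)) * (K * Real.exp (-γ * (t - s)) * Real.exp (ε * s)) :=
          mul_le_mul_of_nonneg_left h1 (Real.exp_pos _).le
      _ = K * Real.exp ((l - μ - γ) * (t - s)) * Real.exp (ε * s) := by
          rw [show (l - μ - γ) * (t - s) = (l - μ) * (t - s) + -γ * (t - s) by ring,
            Real.exp_add]; ring
      _ ≤ K * Real.exp (-(γ - (μ - l)) * (t - s)) * Real.exp (ε * s) := by
          have hle : (l - μ - γ) * (t - s) ≤ -(γ - (μ - l)) * (t - s) := by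
            nlinarith [mul_nonneg (sub_nonneg.mpr hμ) (sub_nonneg.mpr hts)]
          have h2 := Real.exp_le_exp.mpr hle
          have h3 := mul_le_mul_of_nonneg_left h2 hK0.le
          exact mul_le_mul_of_nonneg_right h3 (Real.exp_pos _).le
  · intro t s ht hts
    have h1 := hun t s ht hts
    dsimp only at h1 ⊢
    rw [norm_exp_smul_comp] at h1 ⊢
    calc Real.exp (-μ * (t - s)) * ‖(T t s).comp (ContinuousLinearMap.id ℝ E - P s)‖
        = Real.exp ((l - μ) * (t - s)) *
            (Real.exp (-l * (t - s)) * ‖(T t s).comp (ContinuousLinearMap.id ℝ E - P s)‖) := by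
          rw [← mul_assoc, ← Real.exp_add]; ring_nf
      _ ≤ Real.exp ((l - μ) * (t - s)) * (K * Real.exp (-γ * (s - t)) * Real.exp (ε * s)) :=
          mul_le_mul_of_nonneg_left h1 (Real.exp_pos _).le
      _ = K * Real.exp (-(γ - (μ - l)) * (s - t)) * Real.exp (ε * s) := by
          rw [show -(γ - (μ - l)) * (s - t) = (l - μ) * (t - s) + -γ * (s - t) by ring,
            Real.exp_add]; ring

lemma ed_of_P_id (U : ℝ → ℝ → E →L[ℝ] E) {P : ℝ → E →L[ℝ] E} {K ε γ : ℝ}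
    (h : NonuniformED U P K ε γ) (hP : ∀ s, 0 ≤ s → P s = ContinuousLinearMap.id ℝ E) :
    NonuniformContraction U K ε γ := by
  obtain ⟨hK, hε, hγ, -, -, hst, hun⟩ := h
  refine ⟨hK, hε, hγ, fun t _ => by simp, fun t s _ _ => by simp, ?_, ?_⟩
  · intro s t hs hts
    have := hst s t hs hts
    rwa [hP s hs] at this
  · intro t s ht hts
    have := hun t s ht hts
    rwa [hP s (le_trans ht hts)] at this

lemma key_P_eq_id (U : ℝ → ℝ → E →L[ℝ] E)
    (hcoc : ∀ t r s : ℝ, (U t r).comp (U r s) = U t s)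
    (hid : ∀ s : ℝ, U s s = ContinuousLinearMap.id ℝ E)
    {K₁ ε₁ γ₁ K₂ ε₂ γ₂ : ℝ} {P : ℝ → E →L[ℝ] E}
    (h₁ : NonuniformContraction U K₁ ε₁ γ₁)
    (h₂ : NonuniformED U P K₂ ε₂ γ₂) :
    ∀ s : ℝ, 0 ≤ s → P s = ContinuousLinearMap.id ℝ E := by
  obtain ⟨hK₁, hε₁, hγ₁, -, -, hst₁, -⟩ := h₁
  obtain ⟨hK₂, hε₂, hγ₂, hproj, hcomm, -, hun₂⟩ := h₂
  intro s hs
  have hK₁0 : (0:ℝ) < K₁ := lt_of_lt_of_le one_pos hK₁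
  have hK₂0 : (0:ℝ) < K₂ := lt_of_lt_of_le one_pos hK₂
  ext y
  suffices h0 : y - P s y = 0 by
    have : P s y = y := by
      have h' := sub_eq_zero.mp h0
      exact h'.symm
    simpa using this
  rw [← norm_eq_zero]
  set c := ‖y - P s y‖ with hc
  have hc0 : 0 ≤ c := norm_nonneg _
  have hden : 0 < γ₁ + γ₂ - ε₂ := by linarith
  have hlog : 0 ≤ Real.log (K₁ * K₂) := Real.log_nonneg (by nlinarith)
  set R := (Real.log (K₁ * K₂) + (ε₁ + ε₂) * s + 1) / (γ₁ + γ₂ - ε₂) with hR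
  have hR0 : 0 ≤ R := div_nonneg (by nlinarith) hden.le
  set t := s + R with htdef
  have hts : s ≤ t := le_add_of_nonneg_right hR0
  have ht0 : 0 ≤ t := le_trans hs hts
  have hUinv : ∀ v : E, (U s t) ((U t s) v) = v := by
    intro v
    have h := hcoc s t s
    rw [hid s] at h
    have h' := ContinuousLinearMap.ext_iff.mp h v
    simpa using h'
  have hcommpt : (U t s) (y - P s y) = (U t s) y - P t ((U t s) y) := by
    have h := hcomm t s ht0 hs
    have h' := ContinuousLinearMap.ext_iff.mp h y
    simp only [ContinuousLinearMap.coe_comp', Function.comp_apply] at h'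
    rw [map_sub, h']
  have hPw : P t ((U t s) y - P t ((U t s) y)) = 0 := by
    have h := hproj t ht0
    have h' := ContinuousLinearMap.ext_iff.mp h ((U t s) y)
    simp only [ContinuousLinearMap.coe_comp', Function.comp_apply] at h'
    rw [map_sub, h', sub_self]
  have hyP : y - P s y =
      ((U s t).comp (ContinuousLinearMap.id ℝ E - P t)) ((U t s) (y - P s y)) := by
    simp only [ContinuousLinearMap.coe_comp', Function.comp_apply,
      ContinuousLinearMap.coe_sub', Pi.sub_apply, ContinuousLinearMap.coe_id', id_eq]
    rw [hcommpt, hPw, sub_zero, ← hcommpt, hUinv]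
  have hb1 : ‖(U s t).comp (ContinuousLinearMap.id ℝ E - P t)‖ ≤
      K₂ * Real.exp (-γ₂ * (t - s)) * Real.exp (ε₂ * t) := hun₂ s t hs hts
  have hb2 : ‖U t s‖ ≤ K₁ * Real.exp (-γ₁ * (t - s)) * Real.exp (ε₁ * s) := by
    have := hst₁ s t hs hts
    rwa [ContinuousLinearMap.comp_id] at this
  have hstep : c ≤ (K₂ * Real.exp (-γ₂ * (t - s)) * Real.exp (ε₂ * t)) *
      ((K₁ * Real.exp (-γ₁ * (t - s)) * Real.exp (ε₁ * s)) * c) := by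
    calc c = ‖((U s t).comp (ContinuousLinearMap.id ℝ E - P t)) ((U t s) (y - P s y))‖ := by
          rw [hc, ← hyP]
      _ ≤ ‖(U s t).comp (ContinuousLinearMap.id ℝ E - P t)‖ * ‖(U t s) (y - P s y)‖ :=
          ContinuousLinearMap.le_opNorm _ _
      _ ≤ (K₂ * Real.exp (-γ₂ * (t - s)) * Real.exp (ε₂ * t)) *
            ((K₁ * Real.exp (-γ₁ * (t - s)) * Real.exp (ε₁ * s)) * c) := by
          have h1 : ‖(U t s) (y - P s y)‖ ≤ ‖U t s‖ * c := ContinuousLinearMap.le_opNorm _ _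
          have h2 : ‖(U t s) (y - P s y)‖ ≤
              (K₁ * Real.exp (-γ₁ * (t - s)) * Real.exp (ε₁ * s)) * c :=
            le_trans h1 (mul_le_mul_of_nonneg_right hb2 hc0)
          exact mul_le_mul hb1 h2 (norm_nonneg _) (by positivity)
  have hcoef : (K₂ * Real.exp (-γ₂ * (t - s)) * Real.exp (ε₂ * t)) *
      (K₁ * Real.exp (-γ₁ * (t - s)) * Real.exp (ε₁ * s)) = Real.exp (-1) := by
    have ht_s : t - s = R := by rw [htdef]; ring
    have hmul : R * (γ₁ + γ₂ - ε₂) = Real.log K₁ + Real.log K₂ + (ε₁ + ε₂) * s + 1 := by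
      rw [hR, div_mul_cancel₀ _ hden.ne', Real.log_mul hK₁0.ne' hK₂0.ne']
    rw [ht_s, htdef, show K₁ = Real.exp (Real.log K₁) from (Real.exp_log hK₁0).symm,
      show K₂ = Real.exp (Real.log K₂) from (Real.exp_log hK₂0).symm]
    simp only [← Real.exp_add]
    congr 1
    linarith [hmul]
  have hfin : c ≤ Real.exp (-1) * c := by
    calc c ≤ (K₂ * Real.exp (-γ₂ * (t - s)) * Real.exp (ε₂ * t)) *
        ((K₁ * Real.exp (-γ₁ * (t - s)) * Real.exp (ε₁ * s)) * c) := hstep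
      _ = ((K₂ * Real.exp (-γ₂ * (t - s)) * Real.exp (ε₂ * t)) *
        (K₁ * Real.exp (-γ₁ * (t - s)) * Real.exp (ε₁ * s))) * c := by ring
      _ = Real.exp (-1) * c := by rw [hcoef]
  have hlt : Real.exp (-1) < 1 := by
    rw [show (1:ℝ) = Real.exp 0 by simp]
    exact Real.exp_lt_exp.mpr (by norm_num)
  exact le_antisymm (by nlinarith) hc0

end Aux

/-- under half `(M e^{δ s}, ν)`-nonuniform bounded growth, the system
`x' = A(t)x` admits a nonuniform exponential contraction iff its nonuniform exponential
dichotomy spectrum is contained in `(-∞, 0)`. -/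
theorem contraction_iff_spectrum_negative {n : ℕ}
    (A : ℝ → EuclideanSpace ℝ (Fin n) →L[ℝ] EuclideanSpace ℝ (Fin n))
    (hA : MeasureTheory.LocallyIntegrable A MeasureTheory.volume)
    (T : ℝ → ℝ → EuclideanSpace ℝ (Fin n) →L[ℝ] EuclideanSpace ℝ (Fin n))
    (hT : IsEvolution A T)
    (M δ ν : ℝ) (hbg : HalfNBG T M δ ν) :
    (∃ K ε γ : ℝ, NonuniformContraction T K ε γ) ↔
      NonuniformSpectrum T ⊆ Set.Iio (0 : ℝ) := by
  constructor
  · rintro ⟨K, ε, γ, hc⟩ l hl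
    rw [Set.mem_Iio]
    by_contra hneg
    rw [not_lt] at hneg
    have h0 : NonuniformContraction (fun t s => Real.exp (-(0:ℝ) * (t - s)) • T t s) K ε γ := by
      have heq : (fun t s => Real.exp (-(0:ℝ) * (t - s)) • T t s) = T := by
        funext t s; simp
      rw [heq]; exact hc
    have hεγ : ε < γ := hc.2.2.1
    have hcl := contr_shift T l h0 (show ε < γ + l - 0 by linarith)
    exact hl ⟨fun _ => ContinuousLinearMap.id ℝ _, K, ε, γ + l - 0, hcl⟩
  · intro hspec
    obtain ⟨hM, hδ, hν, hg⟩ := hbg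
    have hM0 : (0:ℝ) < M := lt_of_lt_of_le one_pos hM
    have hdich : ∀ l : ℝ, 0 ≤ l →
        ∃ P K ε γ, NonuniformED (fun t s => Real.exp (-l * (t - s)) • T t s) P K ε γ := by
      intro l hl
      by_contra h
      exact absurd (hspec h) (not_lt.mpr hl)
    set S : Set ℝ := {l | 0 ≤ l ∧ ∃ K ε γ,
      NonuniformContraction (fun t s => Real.exp (-l * (t - s)) • T t s) K ε γ} with hSdef
    have hS1 : (ν + δ + 1) ∈ S := by
      refine ⟨by linarith, M, δ, δ + 1, hM, hδ, by linarith, fun t _ => by simp,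
        fun t s _ _ => by simp, ?_, ?_⟩
      · intro s t hs hts
        dsimp only
        rw [ContinuousLinearMap.comp_id, norm_exp_smul]
        calc Real.exp (-(ν + δ + 1) * (t - s)) * ‖T t s‖
            ≤ Real.exp (-(ν + δ + 1) * (t - s)) *
                (M * Real.exp (ν * (t - s)) * Real.exp (δ * s)) :=
              mul_le_mul_of_nonneg_left (hg s t hs hts) (Real.exp_pos _).le
          _ = M * Real.exp (-(δ + 1) * (t - s)) * Real.exp (δ * s) := by
              rw [show -(δ + 1) * (t - s) = -(ν + δ + 1) * (t - s) + ν * (t - s) by ring,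
                Real.exp_add]; ring
      · intro t s _ _
        simp only [sub_self, ContinuousLinearMap.comp_zero, norm_zero]
        exact mul_nonneg (mul_nonneg hM0.le (Real.exp_pos _).le) (Real.exp_pos _).le
    have hup : ∀ l ∈ S, ∀ m : ℝ, l ≤ m → m ∈ S := by
      intro l hlS m hlm
      obtain ⟨hl0, K, ε, γ, hc⟩ := hlS
      have hεγ : ε < γ := hc.2.2.1
      exact ⟨le_trans hl0 hlm, K, ε, γ + m - l, contr_shift T m hc (by linarith)⟩
    have hbdd : BddBelow S := ⟨0, fun x hx => hx.1⟩
    have hne : S.Nonempty := ⟨ν + δ + 1, hS1⟩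
    set lam := sInf S with hlamdef
    have hlam0 : 0 ≤ lam := le_csInf hne fun x hx => hx.1
    obtain ⟨P, K₂, ε₂, γ₂, hED⟩ := hdich lam hlam0
    have hε₂γ₂ : ε₂ < γ₂ := hED.2.2.1
    have hε₂0 : 0 ≤ ε₂ := hED.2.1
    set μ := lam + (γ₂ - ε₂) / 2 with hμdef
    have hμS : μ ∈ S := by
      have hlt : lam < μ := by rw [hμdef]; linarith
      obtain ⟨x, hxS, hxlt⟩ := exists_lt_of_csInf_lt hne hlt
      exact hup x hxS μ hxlt.le
    obtain ⟨hμ0, K₁, ε₁, γ₁, hC₁⟩ := hμS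
    have hEDμ : NonuniformED (fun t s => Real.exp (-μ * (t - s)) • T t s) P K₂ ε₂
        (γ₂ - (μ - lam)) :=
      ed_shift_up T P μ hED (by rw [hμdef]; linarith) (by rw [hμdef]; linarith)
    have hcoc : ∀ t r s : ℝ, ((fun t s => Real.exp (-μ * (t - s)) • T t s) t r).comp
        ((fun t s => Real.exp (-μ * (t - s)) • T t s) r s) =
        (fun t s => Real.exp (-μ * (t - s)) • T t s) t s := by
      intro t r s
      dsimp only
      rw [ContinuousLinearMap.smul_comp, ContinuousLinearMap.comp_smul, smul_smul,
        ← Real.exp_add, hT.2.1 t r s,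
        show -μ * (t - r) + -μ * (r - s) = -μ * (t - s) by ring]
    have hid : ∀ s : ℝ, (fun t s => Real.exp (-μ * (t - s)) • T t s) s s =
        ContinuousLinearMap.id ℝ (EuclideanSpace ℝ (Fin n)) := by
      intro s
      dsimp only
      rw [hT.1 s]
      simp
    have hPid := key_P_eq_id _ hcoc hid hC₁ hEDμ
    have hClam : NonuniformContraction (fun t s => Real.exp (-lam * (t - s)) • T t s) K₂ ε₂ γ₂ :=
      ed_of_P_id _ hED hPid
    set l0 := max 0 (lam - (γ₂ - ε₂) / 2) with hl0def
    have hl0lam : l0 ≤ lam := max_le hlam0 (by linarith)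
    have hl0S : l0 ∈ S := by
      refine ⟨le_max_left _ _, K₂, ε₂, γ₂ + l0 - lam, contr_shift T l0 hClam ?_⟩
      have hge : lam - (γ₂ - ε₂) / 2 ≤ l0 := le_max_right _ _
      linarith
    have hlaml0 : lam ≤ l0 := csInf_le hbdd hl0S
    have hlamz : lam = 0 := by
      by_contra h
      have hpos : 0 < lam := lt_of_le_of_ne hlam0 (Ne.symm h)
      have hlt' : l0 < lam := max_lt hpos (by linarith)
      linarith
    refine ⟨K₂, ε₂, γ₂, ?_⟩
    have heq : (fun t s => Real.exp (-lam * (t - s)) • T t s) = T := by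
      funext t s
      rw [hlamz]
      simp
    rwa [heq] at hClam

end
end

section
/- Let A : [0,∞) → Mₙ(ℝ) be locally integrable and let f : [0,∞) × ℝⁿ → ℝⁿ be continuous and C¹ in x, with all forward solutions of x' = A(t)x + f(t,x) defined on [t₀,∞) for every t₀ ≥ 0. Assume: (i) x' = A(t)x has a (K e^{εs}, α)-nonuniform exponential dichotomy on [0,∞) with projector P(t) = I and α > ε ≥ 0 (i.e. a nonuniform exponential contraction); (ii) x' = A(t)x has half nonuniform bounded growth on [0,∞); (iii) f(t,0) = 0 for all t ≥ 0. Then there exists δ* ∈ (0, αK) such that if, for every piecewise continuous function y : [0,∞) → ℝⁿ, the Jacobian satisfies ‖J_x f(t,y(t))‖ < (δ/K²) e^{−2εt} for all t ≥ 0 with some δ ∈ (0, δ*], then the trivial solution of x' = A(t)x + f(t,x) is globally nonuniformly asymptotically stable. -/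
open MeasureTheory Filter
set_option maxHeartbeats 1000000
set_option synthInstance.maxHeartbeats 400000

noncomputable section

private lemma opHasDerivAt {E : Type*} [NormedAddCommGroup E] [NormedSpace ℝ E]
    [FiniteDimensional ℝ E] (U : ℝ → E →L[ℝ] E) (D : E →L[ℝ] E) (s : ℝ)
    (h : ∀ x : E, HasDerivAt (fun r => U r x) (D x) s) : HasDerivAt U D s := by
  classical
  set b := Module.Basis.ofVectorSpace ℝ E with hb
  let Ψ : (E →L[ℝ] E) ≃ₗ[ℝ] (Module.Basis.ofVectorSpaceIndex ℝ E → E) :=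
    (LinearMap.toContinuousLinearMap).symm.trans (b.constr ℝ).symm
  let Φ : (E →L[ℝ] E) ≃L[ℝ] (Module.Basis.ofVectorSpaceIndex ℝ E → E) := Ψ.toContinuousLinearEquiv
  have hΦ : ∀ (W : E →L[ℝ] E) i, Φ W i = W (b i) := fun W i => rfl
  have h1 : HasDerivAt (fun r => Φ (U r)) (Φ D) s := by
    rw [hasDerivAt_pi]
    intro i
    simpa [hΦ] using h (b i)
  have h2 := (Φ.symm.toContinuousLinearMap.hasFDerivAt).comp_hasDerivAt s h1
  have h3 : HasDerivAt (fun r => Φ.symm (Φ (U r))) ((Φ.symm : _ →L[ℝ] _) (Φ D)) s := h2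
  simpa using h3

section Evol

variable {E : Type*} [NormedAddCommGroup E] [NormedSpace ℝ E] [FiniteDimensional ℝ E]
  {A : ℝ → E →L[ℝ] E} {T : ℝ → ℝ → E →L[ℝ] E}

private lemma evol_apply (hT : IsEvolution A T) (a c : ℝ) (v : E) (bb : ℝ) :
    T a bb (T bb c v) = T a c v := by
  rw [← ContinuousLinearMap.comp_apply, hT.2.1]

private lemma evol_mul (hT : IsEvolution A T) (a bb c : ℝ) : T a bb * T bb c = T a c := by
  rw [ContinuousLinearMap.mul_def, hT.2.1]

private def evolUnit (hT : IsEvolution A T) (s : ℝ) : (E →L[ℝ] E)ˣ where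
  val := T s 0
  inv := T 0 s
  val_inv := by rw [evol_mul hT s 0 s, hT.1 s]; rfl
  inv_val := by rw [evol_mul hT 0 s 0, hT.1 0]; rfl

private lemma hasDerivAt_U (hT : IsEvolution A T) (s : ℝ) :
    HasDerivAt (fun r => T r 0) ((A s).comp (T s 0)) s :=
  opHasDerivAt _ _ s fun x => hT.2.2 0 x s

private lemma hasDerivAt_V (hT : IsEvolution A T) (s : ℝ) :
    HasDerivAt (fun r => T 0 r) (-(T 0 s * A s)) s := by
  have h2 := (hasFDerivAt_ringInverse (𝕜 := ℝ) (evolUnit hT s)).comp_hasDerivAt s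
    (hasDerivAt_U hT s)
  rw [show (A s).comp (T s 0) = A s * T s 0 from rfl] at h2
  have hfun : (fun r => Ring.inverse (T r 0)) = fun r => T 0 r := by
    funext r
    exact Ring.inverse_unit (evolUnit hT r)
  have h3 : HasDerivAt (fun r => T 0 r)
      ((-ContinuousLinearMap.mulLeftRight ℝ (E →L[ℝ] E) (T 0 s) (T 0 s)) (A s * T s 0)) s := by
    rw [← hfun]
    exact h2
  have hd : (-ContinuousLinearMap.mulLeftRight ℝ (E →L[ℝ] E) (T 0 s) (T 0 s)) (A s * T s 0)
      = -(T 0 s * A s) := by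
    rw [ContinuousLinearMap.neg_apply, ContinuousLinearMap.mulLeftRight_apply]
    rw [← mul_assoc, mul_assoc (T 0 s * A s), evol_mul hT s 0 s, hT.1 s]
    norm_num
    rw [show ContinuousLinearMap.id ℝ E = (1 : E →L[ℝ] E) from rfl, mul_one]
  rw [hd] at h3
  exact h3

private lemma continuous_V (hT : IsEvolution A T) : Continuous (fun s => T 0 s) :=
  continuous_iff_continuousAt.2 fun s => (hasDerivAt_V hT s).continuousAt

end Evol

private lemma gronwall_integral (v : ℝ → ℝ) (hv : Continuous v) (hv0 : ∀ s, 0 ≤ v s)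
    (t₀ C L : ℝ) (hC : 0 ≤ C) (hL : 0 ≤ L)
    (h : ∀ t, t₀ ≤ t → v t ≤ C + ∫ s in t₀..t, L * v s) :
    ∀ t, t₀ ≤ t → v t ≤ C * Real.exp (L * (t - t₀)) := by
  intro t ht
  set F : ℝ → ℝ := fun r => C + ∫ s in t₀..r, L * v s with hF
  have hvL : Continuous fun s => L * v s := continuous_const.mul hv
  have hFd : ∀ r : ℝ, HasDerivAt F (L * v r) r := fun r =>
    (intervalIntegral.integral_hasDerivAt_right (hvL.intervalIntegrable _ _)
      (hvL.stronglyMeasurableAtFilter _ _) hvL.continuousAt).const_add C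
  have hvF : ∀ r, t₀ ≤ r → v r ≤ F r := h
  have hF0 : ∀ r, t₀ ≤ r → 0 ≤ F r := fun r hr => le_trans (hv0 r) (hvF r hr)
  have hg := norm_le_gronwallBound_of_norm_deriv_right_le
    (f := F) (f' := fun r => L * v r) (δ := C) (K := L) (ε := 0) (a := t₀) (b := t)
    (fun r _ => (hFd r).continuousAt.continuousWithinAt)
    (fun r _ => (hFd r).hasDerivWithinAt)
    (by simp [hF, Real.norm_eq_abs, abs_of_nonneg hC])
    (fun r hr => by
      rw [Real.norm_eq_abs, Real.norm_eq_abs, abs_of_nonneg (hF0 r hr.1),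
        abs_of_nonneg (mul_nonneg hL (hv0 r))]
      rw [add_zero]
      exact mul_le_mul_of_nonneg_left (hvF r hr.1) hL)
    t ⟨ht, le_refl t⟩
  rw [gronwallBound_ε0, Real.norm_eq_abs, abs_of_nonneg (hF0 t ht)] at hg
  exact le_trans (hvF t ht) hg


private lemma key_decay {E : Type*} [NormedAddCommGroup E] [NormedSpace ℝ E]
    [FiniteDimensional ℝ E]
    {A : ℝ → E →L[ℝ] E} {T : ℝ → ℝ → E →L[ℝ] E} (hT : IsEvolution A T)
    {f : ℝ → E → E}
    (hfcont : ContinuousOn (fun p : ℝ × E => f p.1 p.2) (Set.Ici 0 ×ˢ Set.univ))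
    {K ε α L : ℝ} (hK : 1 ≤ K) (hε : 0 ≤ ε) (hα : 0 < α)
    (hTnorm : ∀ s t : ℝ, 0 ≤ s → s ≤ t →
      ‖T t s‖ ≤ K * Real.exp (-α * (t - s)) * Real.exp (ε * s))
    (hL0 : 0 ≤ L) (hLα : L ≤ α / 2)
    (hfb : ∀ s : ℝ, 0 ≤ s → ∀ v : E, ‖f s v‖ ≤ L / K * Real.exp (-2 * ε * s) * ‖v‖)
    (t₀ : ℝ) (ht₀ : 0 ≤ t₀) (x : ℝ → E)
    (hx : ∀ t, t₀ ≤ t → HasDerivAt x (A t (x t) + f t (x t)) t) :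
    ∀ t, t₀ ≤ t →
      ‖x t‖ ≤ K * Real.exp (ε * t₀) * ‖x t₀‖ * Real.exp (-(α/2) * (t - t₀)) := by
  have hK0 : (0:ℝ) < K := lt_of_lt_of_le one_pos hK
  have hxc : ∀ s, t₀ ≤ s → ContinuousAt x s := fun s hs => (hx s hs).continuousAt
  have hz : ∀ s, t₀ ≤ s → HasDerivAt (fun r => T 0 r (x r)) (T 0 s (f s (x s))) s := by
    intro s hs
    have h1 := (hasDerivAt_V hT s).clm_apply (hx s hs)
    have h2 : (-(T 0 s * A s)) (x s) + (T 0 s) (A s (x s) + f s (x s))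
        = T 0 s (f s (x s)) := by
      rw [ContinuousLinearMap.neg_apply, ContinuousLinearMap.mul_apply, map_add]
      abel
    rwa [h2] at h1
  have hVc : Continuous fun s : ℝ => T 0 s := continuous_V hT
  have hfx : ∀ t, t₀ ≤ t → ContinuousOn (fun s => f s (x s)) (Set.Icc t₀ t) := by
    intro t ht
    have hxo : ContinuousOn x (Set.Icc t₀ t) := fun s hs => (hxc s hs.1).continuousWithinAt
    have hpair : ContinuousOn (fun s => (s, x s)) (Set.Icc t₀ t) :=
      (continuousOn_id).prodMk hxo
    exact hfcont.comp hpair fun s hs => ⟨le_trans ht₀ hs.1, Set.mem_univ _⟩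
  set C₀ := K * Real.exp (ε * t₀) * ‖x t₀‖ with hC₀
  have hC₀0 : 0 ≤ C₀ := by positivity
  set v : ℝ → ℝ := fun s => Real.exp (α * (max s t₀ - t₀)) * ‖x (max s t₀)‖ with hv
  have hvs : ∀ s, t₀ ≤ s → v s = Real.exp (α * (s - t₀)) * ‖x s‖ := by
    intro s hs; simp only [hv, max_eq_left hs]
  have hv0 : ∀ s, 0 ≤ v s := fun s => by positivity
  have hvcont : Continuous v := by
    rw [continuous_iff_continuousAt]
    intro s
    have h1 : ContinuousAt (fun u : ℝ => max u t₀) s :=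
      (continuous_id.max continuous_const).continuousAt
    have h2 : ContinuousAt (fun u : ℝ => Real.exp (α * (u - t₀)) * ‖x u‖) (max s t₀) := by
      have hexp : ContinuousAt (fun u : ℝ => Real.exp (α * (u - t₀))) (max s t₀) :=
        (Real.continuous_exp.comp
          (continuous_const.mul (continuous_id.sub continuous_const))).continuousAt
      exact hexp.mul (hxc _ (le_max_right s t₀)).norm
    show ContinuousAt ((fun u : ℝ => Real.exp (α * (u - t₀)) * ‖x u‖) ∘ (fun u : ℝ => max u t₀)) s
    exact ContinuousAt.comp h2 h1
  have hmain : ∀ t, t₀ ≤ t → v t ≤ C₀ + ∫ s in t₀..t, L * v s := by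
    intro t ht
    have hw0c : ContinuousOn (fun s => T 0 s (f s (x s))) (Set.Icc t₀ t) :=
      (hVc.continuousOn).clm_apply (hfx t ht)
    have hw0int : IntervalIntegrable (fun s => T 0 s (f s (x s))) volume t₀ t := by
      apply ContinuousOn.intervalIntegrable
      rwa [Set.uIcc_of_le ht]
    have hident : (∫ s in t₀..t, T 0 s (f s (x s))) = T 0 t (x t) - T 0 t₀ (x t₀) :=
      intervalIntegral.integral_eq_sub_of_hasDerivAt
        (fun s hs => hz s (by rw [Set.uIcc_of_le ht] at hs; exact hs.1)) hw0int
    have happ := congrArg (fun u => T t 0 u) hident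
    simp only [map_sub] at happ
    rw [← ContinuousLinearMap.intervalIntegral_comp_comm _ hw0int] at happ
    have e1 : T t 0 (T 0 t (x t)) = x t := by
      rw [evol_apply hT t t (x t) 0, hT.1 t]; rfl
    have e2 : T t 0 (T 0 t₀ (x t₀)) = T t t₀ (x t₀) := evol_apply hT t t₀ (x t₀) 0
    rw [e1, e2] at happ
    have hintc : (∫ s in t₀..t, T t 0 (T 0 s (f s (x s))))
        = ∫ s in t₀..t, T t s (f s (x s)) := by
      apply intervalIntegral.integral_congr
      intro s _
      exact evol_apply hT t s (f s (x s)) 0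
    rw [hintc] at happ
    have hxt : x t = T t t₀ (x t₀) + ∫ s in t₀..t, T t s (f s (x s)) := by
      rw [happ]; abel
    have hwc : ContinuousOn (fun s => T t s (f s (x s))) (Set.Icc t₀ t) := by
      have h' : ContinuousOn (fun s => T t 0 (T 0 s (f s (x s)))) (Set.Icc t₀ t) :=
        (T t 0).continuous.comp_continuousOn hw0c
      exact h'.congr fun s _ => (evol_apply hT t s (f s (x s)) 0).symm
    have hwint : IntervalIntegrable (fun s => T t s (f s (x s))) volume t₀ t := by
      apply ContinuousOn.intervalIntegrable
      rwa [Set.uIcc_of_le ht]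
    have h2 : ‖∫ s in t₀..t, T t s (f s (x s))‖ ≤ ∫ s in t₀..t, ‖T t s (f s (x s))‖ :=
      intervalIntegral.norm_integral_le_integral_norm ht
    have h3 : (∫ s in t₀..t, ‖T t s (f s (x s))‖)
        ≤ ∫ s in t₀..t, L * Real.exp (-α * (t - s)) * ‖x s‖ := by
      apply intervalIntegral.integral_mono_on ht
      · apply ContinuousOn.intervalIntegrable
        rw [Set.uIcc_of_le ht]; exact hwc.norm
      · apply ContinuousOn.intervalIntegrable
        rw [Set.uIcc_of_le ht]
        have hxo : ContinuousOn x (Set.Icc t₀ t) := fun s hs => (hxc s hs.1).continuousWithinAt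
        exact ((continuous_const.mul (Real.continuous_exp.comp
          (continuous_const.mul (continuous_const.sub continuous_id)))).continuousOn).mul hxo.norm
      intro s hs
      have hs0 : (0:ℝ) ≤ s := le_trans ht₀ hs.1
      have h4 : ‖T t s (f s (x s))‖ ≤ ‖T t s‖ * ‖f s (x s)‖ := (T t s).le_opNorm _
      have h5 := hTnorm s t hs0 hs.2
      have h6 := hfb s hs0 (x s)
      have h7 : ‖T t s‖ * ‖f s (x s)‖
          ≤ (K * Real.exp (-α * (t - s)) * Real.exp (ε * s))
            * (L / K * Real.exp (-2 * ε * s) * ‖x s‖) := by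
        apply mul_le_mul h5 h6 (norm_nonneg _) (by positivity)
      have heq : (K * Real.exp (-α * (t - s)) * Real.exp (ε * s))
            * (L / K * Real.exp (-2 * ε * s) * ‖x s‖)
          = L * Real.exp (-α * (t - s)) * ‖x s‖
            * (Real.exp (ε * s) * Real.exp (-2 * ε * s)) := by
        field_simp
      have hexple : Real.exp (ε * s) * Real.exp (-2 * ε * s) ≤ 1 := by
        rw [← Real.exp_add]
        calc Real.exp (ε * s + -2 * ε * s) ≤ Real.exp 0 :=
              Real.exp_le_exp.2 (by nlinarith)
          _ = 1 := Real.exp_zero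
      calc ‖T t s (f s (x s))‖ ≤ ‖T t s‖ * ‖f s (x s)‖ := h4
        _ ≤ L * Real.exp (-α * (t - s)) * ‖x s‖
            * (Real.exp (ε * s) * Real.exp (-2 * ε * s)) := by rw [← heq]; exact h7
        _ ≤ L * Real.exp (-α * (t - s)) * ‖x s‖ * 1 := by
            apply mul_le_mul_of_nonneg_left hexple (by positivity)
        _ = L * Real.exp (-α * (t - s)) * ‖x s‖ := mul_one _
    have hT0 : ‖T t t₀ (x t₀)‖ ≤ K * Real.exp (-α * (t - t₀)) * Real.exp (ε * t₀) * ‖x t₀‖ :=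
      le_trans ((T t t₀).le_opNorm _)
        (mul_le_mul_of_nonneg_right (hTnorm t₀ t ht₀ ht) (norm_nonneg _))
    have hnorm1 : ‖x t‖ ≤ ‖T t t₀ (x t₀)‖ + ‖∫ s in t₀..t, T t s (f s (x s))‖ := by
      rw [hxt]; exact norm_add_le _ _
    have hxle : ‖x t‖ ≤ K * Real.exp (-α * (t - t₀)) * Real.exp (ε * t₀) * ‖x t₀‖
        + ∫ s in t₀..t, L * Real.exp (-α * (t - s)) * ‖x s‖ := by
      linarith
    have hexp0 : (0:ℝ) < Real.exp (α * (t - t₀)) := Real.exp_pos _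
    have hmul := mul_le_mul_of_nonneg_left hxle (le_of_lt hexp0)
    rw [mul_add] at hmul
    have hterm1 : Real.exp (α * (t - t₀))
        * (K * Real.exp (-α * (t - t₀)) * Real.exp (ε * t₀) * ‖x t₀‖) = C₀ := by
      rw [show Real.exp (α * (t - t₀)) * (K * Real.exp (-α * (t - t₀)) * Real.exp (ε * t₀) * ‖x t₀‖)
        = (Real.exp (α * (t - t₀)) * Real.exp (-α * (t - t₀)))
          * (K * Real.exp (ε * t₀) * ‖x t₀‖) from by ring]
      rw [← Real.exp_add, hC₀]
      norm_num
    have hterm2 : Real.exp (α * (t - t₀))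
        * (∫ s in t₀..t, L * Real.exp (-α * (t - s)) * ‖x s‖) = ∫ s in t₀..t, L * v s := by
      rw [← intervalIntegral.integral_const_mul]
      apply intervalIntegral.integral_congr
      intro s hs
      rw [Set.uIcc_of_le ht] at hs
      show Real.exp (α * (t - t₀)) * (L * Real.exp (-α * (t - s)) * ‖x s‖) = L * v s
      rw [hvs s hs.1]
      rw [show Real.exp (α * (t - t₀)) * (L * Real.exp (-α * (t - s)) * ‖x s‖)
          = L * (Real.exp (α * (t - t₀)) * Real.exp (-α * (t - s))) * ‖x s‖ from by ring]
      rw [← Real.exp_add]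
      rw [show α * (t - t₀) + -α * (t - s) = α * (s - t₀) from by ring]
      ring
    rw [hterm1, hterm2] at hmul
    calc v t = Real.exp (α * (t - t₀)) * ‖x t‖ := hvs t ht
      _ ≤ C₀ + ∫ s in t₀..t, L * v s := hmul
  intro t ht
  have hgr := gronwall_integral v hvcont hv0 t₀ C₀ L hC₀0 hL0 hmain t ht
  rw [hvs t ht] at hgr
  have h2 : ‖x t‖ * Real.exp (α * (t - t₀))
      ≤ (C₀ * Real.exp (-(α/2) * (t - t₀))) * Real.exp (α * (t - t₀)) := by
    calc ‖x t‖ * Real.exp (α * (t - t₀)) = Real.exp (α * (t - t₀)) * ‖x t‖ := mul_comm _ _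
      _ ≤ C₀ * Real.exp (L * (t - t₀)) := hgr
      _ ≤ C₀ * Real.exp (-(α/2) * (t - t₀) + α * (t - t₀)) :=
          mul_le_mul_of_nonneg_left (Real.exp_le_exp.2 (by nlinarith)) hC₀0
      _ = (C₀ * Real.exp (-(α/2) * (t - t₀))) * Real.exp (α * (t - t₀)) := by
          rw [Real.exp_add, ← mul_assoc]
  exact le_of_mul_le_mul_right h2 (Real.exp_pos _)

/-- nonuniformly contracted quasilinear systems.  If `x' = A(t)x` has a
`(K e^{ε s}, α)`-nonuniform exponential contraction and half nonuniform bounded growth and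
`f(t,0) = 0`, then there is `δ* ∈ (0, αK)` such that whenever the Jacobian of `f` satisfies
`‖J_x f(t,y(t))‖ < (δ/K²) e^{−2εt}` along every piecewise continuous `y` for some
`δ ∈ (0, δ*]`, the trivial solution of `x' = A(t)x + f(t,x)` is globally nonuniformly
asymptotically stable. -/
theorem quasilinear_NNMYC {n : ℕ}
    (A : ℝ → EuclideanSpace ℝ (Fin n) →L[ℝ] EuclideanSpace ℝ (Fin n))
    (hA : MeasureTheory.LocallyIntegrable A MeasureTheory.volume)
    (T : ℝ → ℝ → EuclideanSpace ℝ (Fin n) →L[ℝ] EuclideanSpace ℝ (Fin n))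
    (hT : IsEvolution A T)
    (f : ℝ → EuclideanSpace ℝ (Fin n) → EuclideanSpace ℝ (Fin n))
    (Jf : ℝ → EuclideanSpace ℝ (Fin n) →
      EuclideanSpace ℝ (Fin n) →L[ℝ] EuclideanSpace ℝ (Fin n))
    (hfcont : ContinuousOn (fun p : ℝ × EuclideanSpace ℝ (Fin n) => f p.1 p.2)
      (Set.Ici 0 ×ˢ Set.univ))
    (hfC1 : ∀ (t : ℝ) (x : EuclideanSpace ℝ (Fin n)), HasFDerivAt (f t) (Jf t x) x)
    (hJfcont : ∀ t : ℝ, Continuous (Jf t))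
    (hglobal : ∀ (t₀ : ℝ) (x₀ : EuclideanSpace ℝ (Fin n)), 0 ≤ t₀ →
      ∃ x : ℝ → EuclideanSpace ℝ (Fin n), x t₀ = x₀ ∧
        ∀ t, t₀ ≤ t → HasDerivAt x (A t (x t) + f t (x t)) t)
    (K ε α : ℝ)
    (hcontr : NonuniformContraction T K ε α)
    (hbg : ∃ M δ' ν : ℝ, HalfNBG T M δ' ν)
    (hfzero : ∀ t : ℝ, 0 ≤ t → f t 0 = 0) :
    ∃ δstar : ℝ, 0 < δstar ∧ δstar < α * K ∧
      ∀ δ : ℝ, 0 < δ → δ ≤ δstar →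
        (∀ y : ℝ → EuclideanSpace ℝ (Fin n), PiecewiseContinuous y →
          ∀ t : ℝ, 0 ≤ t → ‖Jf t (y t)‖ < δ / K ^ 2 * Real.exp (-2 * ε * t)) →
        GloballyNonuniformlyAsymptoticallyStable (fun t x => A t x + f t x) := by

  classical
  obtain ⟨hK, hε, hεα, -, -, hTbound, -⟩ := hcontr
  have hK0 : (0:ℝ) < K := lt_of_lt_of_le one_pos hK
  have hα : (0:ℝ) < α := lt_of_le_of_lt hε hεα
  have hTnorm : ∀ s t : ℝ, 0 ≤ s → s ≤ t →
      ‖T t s‖ ≤ K * Real.exp (-α * (t - s)) * Real.exp (ε * s) := by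
    intro s t hs hst
    have h := hTbound s t hs hst
    rwa [ContinuousLinearMap.comp_id] at h
  refine ⟨α * K / 2, by positivity, by nlinarith, ?_⟩
  intro δ hδ0 hδstar hJ
  set L := δ / K with hLdef
  have hL0 : 0 ≤ L := by positivity
  have hLα : L ≤ α / 2 := by
    rw [hLdef, div_le_iff₀ hK0]
    nlinarith
  have hJf : ∀ t : ℝ, 0 ≤ t → ∀ y, ‖Jf t y‖ ≤ δ / K ^ 2 * Real.exp (-2 * ε * t) :=
    fun t ht y => le_of_lt (hJ (fun _ => y) (fun _ _ => ⟨∅, continuousOn_const⟩) t ht)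
  have hfb : ∀ t : ℝ, 0 ≤ t → ∀ v : EuclideanSpace ℝ (Fin n),
      ‖f t v‖ ≤ L / K * Real.exp (-2 * ε * t) * ‖v‖ := by
    intro t ht v
    have h1 := convex_univ.norm_image_sub_le_of_norm_hasFDerivWithin_le
      (f := f t) (f' := Jf t) (fun y _ => (hfC1 t y).hasFDerivWithinAt)
      (fun y _ => hJf t ht y) (Set.mem_univ 0) (Set.mem_univ v)
    have h2 : L / K = δ / K ^ 2 := by rw [hLdef, div_div, sq]
    rw [h2]
    simpa [hfzero t ht] using h1
  have key : ∀ t₀ : ℝ, 0 ≤ t₀ → ∀ x : ℝ → EuclideanSpace ℝ (Fin n),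
      (∀ t, t₀ ≤ t → HasDerivAt x (A t (x t) + f t (x t)) t) →
      ∀ t, t₀ ≤ t →
        ‖x t‖ ≤ K * Real.exp (ε * t₀) * ‖x t₀‖ * Real.exp (-(α/2) * (t - t₀)) :=
    fun t₀ ht₀ x hx => key_decay hT hfcont hK hε hα hTnorm hL0 hLα hfb t₀ ht₀ x hx
  constructor
  · intro t₀ ht₀ η hη
    refine ⟨η / (K * Real.exp (ε * t₀)), by positivity, ?_⟩
    intro x hx hx0 t ht
    have h1 := key t₀ ht₀ x hx t ht
    have h2 : Real.exp (-(α/2) * (t - t₀)) ≤ 1 := by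
      rw [show (1:ℝ) = Real.exp 0 from Real.exp_zero.symm]
      exact Real.exp_le_exp.2 (by nlinarith)
    calc ‖x t‖ ≤ K * Real.exp (ε * t₀) * ‖x t₀‖ * Real.exp (-(α/2) * (t - t₀)) := h1
      _ ≤ K * Real.exp (ε * t₀) * ‖x t₀‖ * 1 :=
          mul_le_mul_of_nonneg_left h2 (by positivity)
      _ = K * Real.exp (ε * t₀) * ‖x t₀‖ := mul_one _
      _ < K * Real.exp (ε * t₀) * (η / (K * Real.exp (ε * t₀))) :=
          mul_lt_mul_of_pos_left hx0 (by positivity)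
      _ = η := by field_simp
  · intro t₀ ht₀ x hx
    rw [tendsto_zero_iff_norm_tendsto_zero]
    apply squeeze_zero' (Filter.Eventually.of_forall fun t => norm_nonneg _)
      (g := fun t => K * Real.exp (ε * t₀) * ‖x t₀‖ * Real.exp (-(α/2) * (t - t₀)))
    · filter_upwards [eventually_ge_atTop t₀] with t ht
      exact key t₀ ht₀ x hx t ht
    · rw [show (0:ℝ) = K * Real.exp (ε * t₀) * ‖x t₀‖ * 0 from (mul_zero _).symm]
      apply Filter.Tendsto.const_mul
      apply Real.tendsto_exp_atBot.comp
      apply (tendsto_const_mul_atBot_of_neg (by linarith : -(α/2) < (0:ℝ))).2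
      exact tendsto_atTop_add_const_right _ _ tendsto_id

end
end
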